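/- arXiv:math/0510413 — 4 statements merged into one kernel-verified Lean document; each statement's English description precedes it below -/
import Mathlib

section
/- Let M be an immersed surface in ℝ⁴, let p ∈ M be a non-umbilic point, and let g denote the first fundamental form of M. Then there exists a unique vector c_p ∈ N_pM such that c_p·α_p = g_p (i.e. ⟨c_p, α_p(X,Y)⟩ = ⟨X,Y⟩ for all X,Y ∈ T_pM) if and only if p is a semiumbilic point that is not a point of inflection. -/
/- Local framework: an immersed surface in ℝⁿ is given by a smooth parametrization
`ψ : Pl → Amb n` (`Pl = ℝ²` the parameter domain) whose differential is everywhere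
injective.  Tangent/normal spaces, fundamental forms, connections, curvature ellipse,
(semi)umbilic and inflection points, flatness, etc. are defined from `ψ`. -/

noncomputable section
open scoped RealInnerProductSpace

/-- The parameter plane ℝ². -/
abbrev Pl := EuclideanSpace ℝ (Fin 2)
/-- Ambient Euclidean space ℝⁿ. -/
abbrev Amb (n : ℕ) := EuclideanSpace ℝ (Fin n)

/-- `ψ` is a smooth immersion. -/
def Immersion {n : ℕ} (ψ : Pl → Amb n) : Prop :=
  ContDiff ℝ (⊤ : ℕ∞) ψ ∧ ∀ q, Function.Injective (fderiv ℝ ψ q)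

/-- Tangent plane `T_pM` (as a linear subspace of the ambient space) at the point
with parameter `q`. -/
def Tang {n : ℕ} (ψ : Pl → Amb n) (q : Pl) : Submodule ℝ (Amb n) :=
  LinearMap.range (fderiv ℝ ψ q : Pl →ₗ[ℝ] Amb n)

/-- Normal space `N_pM = (T_pM)ᗮ`. -/
def Nor {n : ℕ} (ψ : Pl → Amb n) (q : Pl) : Submodule ℝ (Amb n) :=
  (Tang ψ q)ᗮ

/-- Tangential part `X ↦ X^⊤` of an ambient vector. -/
def tproj {n : ℕ} (ψ : Pl → Amb n) (q : Pl) (x : Amb n) : Amb n :=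
  ((Tang ψ q).orthogonalProjectionOnto x : Amb n)

/-- Normal part `X ↦ X^⊥` of an ambient vector. -/
def nproj {n : ℕ} (ψ : Pl → Amb n) (q : Pl) (x : Amb n) : Amb n :=
  x - tproj ψ q x

/-- The second fundamental form `α` at the point of parameter `q`, evaluated on the
tangent vectors `dψ_q v`, `dψ_q w` (for parameter directions `v w : Pl`):
`α(dψ v, dψ w) = (D_{dψ v} (dψ w))^⊥ = (∂_v ∂_w ψ)^⊥`. -/
def sff {n : ℕ} (ψ : Pl → Amb n) (q : Pl) (v w : Pl) : Amb n :=
  nproj ψ q (fderiv ℝ (fun x => fderiv ℝ ψ x w) q v)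

/-- The curvature ellipse at `q`: image of `η(t) = α(t,t)` over the unit tangent
vectors `t = dψ_q v`. -/
def Ellipse {n : ℕ} (ψ : Pl → Amb n) (q : Pl) : Set (Amb n) :=
  {z | ∃ v : Pl, ‖fderiv ℝ ψ q v‖ = 1 ∧ z = sff ψ q v v}

/-- `q` is an umbilic point: the curvature ellipse degenerates to a point. -/
def Umbilic {n : ℕ} (ψ : Pl → Amb n) (q : Pl) : Prop :=
  ∃ a : Amb n, Ellipse ψ q = {a}

/-- `q` is a semiumbilic point: the curvature ellipse lies in an affine line. -/
def Semiumbilic {n : ℕ} (ψ : Pl → Amb n) (q : Pl) : Prop :=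
  ∃ a b : Amb n, Ellipse ψ q ⊆ {x | ∃ s : ℝ, x = a + s • b}

/-- `q` is a point of inflection: the curvature ellipse lies in a line through the
origin of the normal space. -/
def Inflection {n : ℕ} (ψ : Pl → Amb n) (q : Pl) : Prop :=
  ∃ b : Amb n, Ellipse ψ q ⊆ {x | ∃ s : ℝ, x = s • b}

/-- The surface is semiumbilical: every point is semiumbilic and not of inflection. -/
def Semiumbilical {n : ℕ} (ψ : Pl → Amb n) : Prop :=
  ∀ q, Semiumbilic ψ q ∧ ¬ Inflection ψ q

/-- A smooth ambient-valued field which is everywhere tangent. -/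
def TangentField {n : ℕ} (ψ : Pl → Amb n) (F : Pl → Amb n) : Prop :=
  ContDiff ℝ (⊤ : ℕ∞) F ∧ ∀ q, F q ∈ Tang ψ q

/-- A smooth ambient-valued field which is everywhere normal (a section of `NM`). -/
def NormalField {n : ℕ} (ψ : Pl → Amb n) (F : Pl → Amb n) : Prop :=
  ContDiff ℝ (⊤ : ℕ∞) F ∧ ∀ q, F q ∈ Nor ψ q

/-- The tangent covariant derivative `∇^⊤ F = (D F)^⊤` of an ambient field `F`
along the `i`-th coordinate direction of the parameter plane. -/
def covT {n : ℕ} (ψ : Pl → Amb n) (F : Pl → Amb n) (i : Fin 2) (q : Pl) : Amb n :=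
  tproj ψ q (fderiv ℝ F q (EuclideanSpace.single i (1:ℝ)))

/-- The tangent connection `∇^⊤` is flat: its curvature `R(∂₁,∂₂)` annihilates every
smooth tangent field (by tensoriality of the curvature this means `R = 0`, since the
coordinate fields `∂₁, ∂₂` commute and span). -/
def FlatSurface {n : ℕ} (ψ : Pl → Amb n) : Prop :=
  ∀ F : Pl → Amb n, TangentField ψ F →
    ∀ q, covT ψ (covT ψ F 1) 0 q = covT ψ (covT ψ F 0) 1 q

/-- A tangent field is parallel: `∇^⊤ Y = (D Y)^⊤ = 0` in every tangent direction. -/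
def ParallelT {n : ℕ} (ψ : Pl → Amb n) (F : Pl → Amb n) : Prop :=
  ∀ q (v : Pl), tproj ψ q (fderiv ℝ F q v) = 0

/-- A normal section is parallel: `∇^⊥ u = (D u)^⊥ = 0` in every tangent direction. -/
def ParallelN {n : ℕ} (ψ : Pl → Amb n) (F : Pl → Amb n) : Prop :=
  ∀ q (v : Pl), nproj ψ q (fderiv ℝ F q v) = 0

/-- `c · α = g`: the normal section `c` satisfies `⟨c, α(X,Y)⟩ = ⟨X,Y⟩` for all
tangent vectors `X = dψ v`, `Y = dψ w`. -/
def CAG {n : ℕ} (ψ : Pl → Amb n) (c : Pl → Amb n) : Prop :=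
  ∀ q (v w : Pl), (⟪c q, sff ψ q v w⟫) = ⟪fderiv ℝ ψ q v, fderiv ℝ ψ q w⟫

/-- `e` is a tangent field with `∇^⊤_X e = X` for every tangent vector `X = dψ v`. -/
def EulerField {n : ℕ} (ψ : Pl → Amb n) (e : Pl → Amb n) : Prop :=
  TangentField ψ e ∧ ∀ q (v : Pl), tproj ψ q (fderiv ℝ e q v) = fderiv ℝ ψ q v

/-- `j` is the tangent field `½ grad⟨c,c⟩` (gradient with respect to the first
fundamental form): `⟨2 j, dψ v⟩ = d⟨c,c⟩(dψ v)` for every direction `v`. -/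
def HalfGradCSq {n : ℕ} (ψ : Pl → Amb n) (c j : Pl → Amb n) : Prop :=
  TangentField ψ j ∧
    ∀ q (v : Pl), 2 * (⟪j q, fderiv ℝ ψ q v⟫) = fderiv ℝ (fun x => (⟪c x, c x⟫ : ℝ)) q v

/-- `k` is a normal section with `(D_X (e - k))^⊥ = 0` for all tangent `X`. -/
def KField {n : ℕ} (ψ : Pl → Amb n) (e k : Pl → Amb n) : Prop :=
  NormalField ψ k ∧ ∀ q (v : Pl), nproj ψ q (fderiv ℝ (fun x => e x - k x) q v) = 0

/-- `dψ_q v` is a (unit) asymptotic direction at `q`: `η(t) = α(t,t)` is an endpoint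
(extreme point) of the segment into which the curvature ellipse degenerates. -/
def IsAsymptotic {n : ℕ} (ψ : Pl → Amb n) (q : Pl) (v : Pl) : Prop :=
  ‖fderiv ℝ ψ q v‖ = 1 ∧ sff ψ q v v ∈ Set.extremePoints ℝ (Ellipse ψ q)

/-!
In an orthonormal frame `e₁, e₂` of `T_pM` write `α(e₁,e₁) = H + B`, `α(e₂,e₂) = H - B` and
`α(e₁,e₂) = C`. The curvature ellipse is then `H + cos 2θ • B + sin 2θ • C`, so `p` is
semiumbilic iff `span {B, C}` has dimension at most one, a point of inflection iff
`span {H, B, C}` does, and non-umbilic iff `span {B, C} ≠ 0`. On the other hand `c · α = g`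
says exactly that `⟪c, H⟫ = 1` and `c ⊥ B, C`. So the normal vectors in question are the
solutions of one affine equation on `N_pM ∩ {B, C}ᗮ`, a space of dimension
`2 - dim span {B, C}`; there is exactly one iff this space is a line on which `⟪·, H⟫` does not
vanish, i.e. iff `dim span {B, C} = 1` and `H ∉ span {B, C}`.
-/

open Module

theorem vectorSpan_insert_zero {K V : Type*} [Ring K] [AddCommGroup V] [Module K V] (s : Set V) :
    vectorSpan K (insert 0 s) = Submodule.span K s := by
  rw [vectorSpan_eq_span_vsub_set_right K (Set.mem_insert 0 s)]
  simp

theorem Submodule.finrank_eq_one_and_not_mem_iff {K V : Type*} [Field K] [AddCommGroup V]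
    [Module K V] {W : Submodule K V} [FiniteDimensional K W] (hW : W ≠ ⊥) (h : V) :
    finrank K W = 1 ∧ h ∉ W ↔ finrank K W ≤ 1 ∧ ¬ finrank K ↥((K ∙ h) ⊔ W) ≤ 1 := by
  have hpos : finrank K W ≠ 0 := fun h0 => hW (Submodule.finrank_eq_zero.mp h0)
  refine ⟨fun ⟨h1, hh⟩ => ⟨h1.le, fun hle => hh ?_⟩,
    fun ⟨hle, hsup⟩ => ⟨by omega, fun hh => hsup ?_⟩⟩
  · rw [Submodule.eq_of_le_of_finrank_le le_sup_right (hle.trans h1.ge)]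
    exact Submodule.mem_sup_left (Submodule.mem_span_singleton_self h)
  · rwa [sup_eq_right.mpr ((Submodule.span_singleton_le_iff_mem _ _).mpr hh)]

section Ellipse
variable {V : Type*} [AddCommGroup V] [Module ℝ V]

/-- With `(a, b) = (cos θ, sin θ)` the points are `H + cos 2θ • B + sin 2θ • C`. -/
def ellipseOf (H B C : V) : Set V :=
  {z | ∃ a b : ℝ, a ^ 2 + b ^ 2 = 1 ∧ z = H + (a ^ 2 - b ^ 2) • B + (2 * a * b) • C}

variable {H B C : V}

theorem ellipseOf_zero_zero (H : V) : ellipseOf H 0 0 = {H} := by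
  refine Set.eq_singleton_iff_unique_mem.mpr ⟨⟨1, 0, by norm_num, by simp⟩, ?_⟩
  rintro z ⟨a, b, -, rfl⟩
  simp

theorem add_sub_mem_ellipseOf :
    H + B ∈ ellipseOf H B C ∧ H - B ∈ ellipseOf H B C ∧
      H + C ∈ ellipseOf H B C ∧ H - C ∈ ellipseOf H B C := by
  have hs : √2⁻¹ ^ 2 = 2⁻¹ := Real.sq_sqrt (by norm_num)
  refine ⟨⟨1, 0, by norm_num, by module⟩, ⟨0, 1, by norm_num, by module⟩,
    ⟨√2⁻¹, √2⁻¹, by rw [hs]; norm_num, ?_⟩, ⟨√2⁻¹, -√2⁻¹, by rw [neg_sq, hs]; norm_num, ?_⟩⟩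
  · rw [show 2 * √2⁻¹ * √2⁻¹ = 1 by linear_combination 2 * hs]; module
  · rw [show 2 * √2⁻¹ * -√2⁻¹ = -1 by linear_combination -2 * hs]; module

theorem vectorSpan_ellipseOf : vectorSpan ℝ (ellipseOf H B C) = Submodule.span ℝ {B, C} := by
  obtain ⟨h₁, h₂, h₃, h₄⟩ := add_sub_mem_ellipseOf (H := H) (B := B) (C := C)
  refine le_antisymm ?_ ?_
  · rw [vectorSpan_def, Submodule.span_le]
    rintro _ ⟨_, ⟨a, b, -, rfl⟩, _, ⟨a', b', -, rfl⟩, rfl⟩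
    refine Submodule.mem_span_pair.mpr ⟨(a ^ 2 - b ^ 2) - (a' ^ 2 - b' ^ 2),
      2 * a * b - 2 * a' * b', ?_⟩
    simp only [vsub_eq_sub]
    module
  · rw [Submodule.span_le, Set.insert_subset_iff, Set.singleton_subset_iff, SetLike.mem_coe,
      SetLike.mem_coe]
    constructor
    · convert Submodule.smul_mem _ (2⁻¹ : ℝ) (vsub_mem_vectorSpan ℝ h₁ h₂) using 1
      rw [vsub_eq_sub]; module
    · convert Submodule.smul_mem _ (2⁻¹ : ℝ) (vsub_mem_vectorSpan ℝ h₃ h₄) using 1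
      rw [vsub_eq_sub]; module

theorem span_ellipseOf : Submodule.span ℝ (ellipseOf H B C) = Submodule.span ℝ {H, B, C} := by
  obtain ⟨h₁, h₂, h₃, h₄⟩ := add_sub_mem_ellipseOf (H := H) (B := B) (C := C)
  have hmem : ∀ {z}, z ∈ ellipseOf H B C → z ∈ Submodule.span ℝ (ellipseOf H B C) :=
    fun hz => Submodule.subset_span hz
  refine le_antisymm ?_ ?_
  · rw [Submodule.span_le]
    rintro _ ⟨a, b, -, rfl⟩
    have hH : H ∈ Submodule.span ℝ {H, B, C} := Submodule.subset_span (by simp)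
    have hB : B ∈ Submodule.span ℝ {H, B, C} := Submodule.subset_span (by simp)
    have hC : C ∈ Submodule.span ℝ {H, B, C} := Submodule.subset_span (by simp)
    exact add_mem (add_mem hH (Submodule.smul_mem _ _ hB)) (Submodule.smul_mem _ _ hC)
  · simp only [Submodule.span_le, Set.insert_subset_iff, Set.singleton_subset_iff,
      SetLike.mem_coe]
    refine ⟨?_, ?_, ?_⟩
    · convert Submodule.smul_mem _ (2⁻¹ : ℝ) (add_mem (hmem h₁) (hmem h₂)) using 1; module
    · convert Submodule.smul_mem _ (2⁻¹ : ℝ) (sub_mem (hmem h₁) (hmem h₂)) using 1; module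
    · convert Submodule.smul_mem _ (2⁻¹ : ℝ) (sub_mem (hmem h₃) (hmem h₄)) using 1; module

end Ellipse

section InnerProduct
variable {E : Type*} [NormedAddCommGroup E] [InnerProductSpace ℝ E]

theorem Submodule.mem_orthogonal_span_pair_iff {x y z : E} :
    z ∈ (Submodule.span ℝ {x, y})ᗮ ↔ ⟪z, x⟫ = 0 ∧ ⟪z, y⟫ = 0 := by
  rw [Submodule.span_insert, ← Submodule.inf_orthogonal, Submodule.mem_inf,
    Submodule.mem_orthogonal_singleton_iff_inner_left,
    Submodule.mem_orthogonal_singleton_iff_inner_left]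

theorem Submodule.existsUnique_mem_inner_eq_one_iff (S : Submodule ℝ E) (h : E) :
    (∃! c, c ∈ S ∧ ⟪c, h⟫ = 1) ↔ finrank ℝ S = 1 ∧ h ∉ Sᗮ := by
  constructor
  · rintro ⟨c, ⟨hcS, hch⟩, huniq⟩
    have hc : c ≠ 0 := by rintro rfl; simp at hch
    have hS : S = ℝ ∙ c := by
      refine le_antisymm (fun x hx => Submodule.mem_span_singleton.mpr ⟨⟪x, h⟫, ?_⟩)
        ((Submodule.span_singleton_le_iff_mem _ _).mpr hcS)
      have := huniq (c + (x - ⟪x, h⟫ • c))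
        ⟨S.add_mem hcS (S.sub_mem hx (S.smul_mem _ hcS)), by
          rw [inner_add_left, inner_sub_left, real_inner_smul_left, hch]; ring⟩
      linear_combination (norm := module) -this
    refine ⟨hS ▸ finrank_span_singleton hc, fun hh => ?_⟩
    simp [Submodule.inner_right_of_mem_orthogonal hcS hh] at hch
  · rintro ⟨hrank, hh⟩
    have : FiniteDimensional ℝ S := Module.finite_of_finrank_eq_succ hrank
    obtain ⟨w, hSw⟩ := (Submodule.finrank_le_one_iff_isPrincipal S).mp hrank.le
    have hwh : ⟪w, h⟫ ≠ 0 := fun h0 =>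
      hh (hSw ▸ (Submodule.mem_orthogonal_singleton_iff_inner_right).mpr h0)
    refine ⟨⟪w, h⟫⁻¹ • w, ⟨?_, ?_⟩, ?_⟩
    · exact hSw ▸ Submodule.smul_mem _ _ (Submodule.mem_span_singleton_self w)
    · rw [real_inner_smul_left, inv_mul_cancel₀ hwh]
    · rintro y ⟨hyS, hyh⟩
      obtain ⟨t, rfl⟩ := Submodule.mem_span_singleton.mp (hSw ▸ hyS)
      rw [real_inner_smul_left] at hyh
      rw [eq_inv_of_mul_eq_one_left hyh]

theorem Submodule.mem_orthogonal_inf_orthogonal_iff {W N : Submodule ℝ E}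
    [W.HasOrthogonalProjection] (hWN : W ≤ N) {h : E} (hh : h ∈ N) :
    h ∈ (Wᗮ ⊓ N)ᗮ ↔ h ∈ W := by
  refine ⟨fun hperp => ?_, fun hW => ?_⟩
  · obtain ⟨w, hw, k, hk, rfl⟩ :=
      Submodule.mem_sup.mp ((Submodule.sup_orthogonal_inf_of_hasOrthogonalProjection hWN).ge hh)
    have hkk : ⟪k, k⟫ = 0 := by
      have := Submodule.inner_right_of_mem_orthogonal hk hperp
      rwa [inner_add_right, Submodule.inner_left_of_mem_orthogonal hw hk.1, zero_add] at this
    rwa [inner_self_eq_zero.mp hkk, add_zero]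
  · exact fun k hk => Submodule.inner_left_of_mem_orthogonal hW hk.1

theorem Submodule.existsUnique_mem_orthogonal_inf_inner_eq_one_iff {N W : Submodule ℝ E}
    [FiniteDimensional ℝ N] (hN : finrank ℝ N = 2) (hWN : W ≤ N) {h : E} (hh : h ∈ N) :
    (∃! c, c ∈ Wᗮ ⊓ N ∧ ⟪c, h⟫ = 1) ↔ finrank ℝ W = 1 ∧ h ∉ W := by
  have : FiniteDimensional ℝ W := Submodule.finiteDimensional_of_le hWN
  have hdim := Submodule.finrank_add_inf_finrank_orthogonal hWN
  rw [Submodule.existsUnique_mem_inner_eq_one_iff,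
    Submodule.mem_orthogonal_inf_orthogonal_iff hWN hh]
  exact and_congr_left' (by omega)

end InnerProduct

section Frame
variable {V F : Type*} [AddCommGroup V] [Module ℝ V] [NormedAddCommGroup F] [InnerProductSpace ℝ F]

theorem LinearMap.exists_orthonormal_comp {ι : Type*} [Fintype ι] [FiniteDimensional ℝ V]
    (L : V →ₗ[ℝ] F) (hL : Function.Injective L) (hι : Fintype.card ι = finrank ℝ V) :
    ∃ u : ι → V, Orthonormal ℝ (L ∘ u) := by
  have hrank : finrank ℝ (LinearMap.range L) = Fintype.card ι :=
    (LinearMap.finrank_range_of_inj hL).trans hι.symm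
  let b : OrthonormalBasis ι ℝ (LinearMap.range L) :=
    (stdOrthonormalBasis ℝ _).reindex (Fintype.equivFinOfCardEq hrank.symm).symm
  refine ⟨fun i => (LinearEquiv.ofInjective L hL).symm (b i), ?_⟩
  convert b.orthonormal.comp_linearIsometry (LinearMap.range L).subtypeₗᵢ
  ext i
  simp

variable {L : V →ₗ[ℝ] F} {u : Fin 2 → V}

theorem Orthonormal.exists_eq_smul_add_smul_of_comp (hu : Orthonormal ℝ (L ∘ u))
    (hV : finrank ℝ V = 2) (v : V) : ∃ a b : ℝ, v = a • u 0 + b • u 1 := by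
  have hspan := (hu.linearIndependent.of_comp L).span_eq_top_of_card_eq_finrank (by simp [hV])
  obtain ⟨c, hc⟩ :=
    (Submodule.mem_span_range_iff_exists_fun ℝ).mp (hspan ▸ Submodule.mem_top (x := v))
  exact ⟨c 0, c 1, by rw [← hc, Fin.sum_univ_two]⟩

theorem Orthonormal.inner_smul_add_smul_of_comp (hu : Orthonormal ℝ (L ∘ u)) (a b a' b' : ℝ) :
    ⟪L (a • u 0 + b • u 1), L (a' • u 0 + b' • u 1)⟫ = a * a' + b * b' := by
  have h := orthonormal_iff_ite.mp hu
  simp only [Function.comp_apply] at h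
  simp only [map_add, map_smul, inner_add_left, inner_add_right, real_inner_smul_left,
    real_inner_smul_right, h, ↓reduceIte, one_ne_zero, zero_ne_one]
  ring

end Frame

section Surface
variable {n : ℕ} {ψ : Pl → Amb n} {q : Pl} {u : Fin 2 → Pl}

theorem nproj_eq_starProjection (x : Amb n) : nproj ψ q x = (Nor ψ q).starProjection x := by
  rw [Nor, Submodule.starProjection_orthogonal_val]
  rfl

theorem sff_eq_starProjection (hψ : ContDiff ℝ (⊤ : ℕ∞) ψ) (v w : Pl) :
    sff ψ q v w = (Nor ψ q).starProjection (fderiv ℝ (fderiv ℝ ψ) q v w) := by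
  have hD : DifferentiableAt ℝ (fderiv ℝ ψ) q :=
    (hψ.fderiv_right (m := 1) (by norm_cast)).differentiable one_ne_zero q
  rw [sff, fderiv_clm_apply hD (differentiableAt_const w), nproj_eq_starProjection]
  simp

theorem sff_mem_nor (hψ : ContDiff ℝ (⊤ : ℕ∞) ψ) (v w : Pl) : sff ψ q v w ∈ Nor ψ q := by
  rw [sff_eq_starProjection hψ]
  exact Submodule.starProjection_apply_mem _ _

theorem sff_comm (hψ : ContDiff ℝ (⊤ : ℕ∞) ψ) (v w : Pl) : sff ψ q v w = sff ψ q w v := by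
  have hsymm := hψ.contDiffAt.isSymmSndFDerivAt (x := q) (by
    rw [minSmoothness_of_isRCLikeNormedField]; exact WithTop.coe_le_coe.mpr le_top)
  rw [sff_eq_starProjection hψ, sff_eq_starProjection hψ, hsymm v w]

theorem sff_smul_add_smul (hψ : ContDiff ℝ (⊤ : ℕ∞) ψ) (u₀ u₁ : Pl) (a b a' b' : ℝ) :
    sff ψ q (a • u₀ + b • u₁) (a' • u₀ + b' • u₁) =
      (a * a') • sff ψ q u₀ u₀ + (a * b' + b * a') • sff ψ q u₀ u₁ + (b * b') • sff ψ q u₁ u₁ := by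
  have h10 := sff_comm (q := q) hψ u₁ u₀
  simp only [sff_eq_starProjection hψ] at h10 ⊢
  simp only [map_add, map_smul, add_apply, smul_apply, h10]
  module

theorem finrank_nor_add_two (hinj : Function.Injective (fderiv ℝ ψ q)) :
    finrank ℝ (Nor ψ q) + 2 = n := by
  have hT : finrank ℝ (Tang ψ q) = 2 := by
    have := LinearMap.finrank_range_of_inj (f := (fderiv ℝ ψ q : Pl →ₗ[ℝ] Amb n)) hinj
    rwa [finrank_euclideanSpace_fin] at this
  have := Submodule.finrank_add_finrank_orthogonal (Tang ψ q)
  rw [hT, finrank_euclideanSpace_fin] at this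
  rw [Nor]
  omega

theorem semiumbilic_iff_collinear : Semiumbilic ψ q ↔ Collinear ℝ (Ellipse ψ q) := by
  simp only [Semiumbilic, collinear_iff_exists_forall_eq_smul_vadd, Set.subset_def,
    Set.mem_ofPred_eq, vadd_eq_add, add_comm]

theorem inflection_iff_collinear_insert_zero :
    Inflection ψ q ↔ Collinear ℝ (insert 0 (Ellipse ψ q)) := by
  simp only [Inflection, collinear_iff_of_mem (Set.mem_insert _ _), Set.subset_def,
    Set.mem_ofPred_eq, vadd_eq_add, add_zero, Set.forall_mem_insert]
  exact exists_congr fun b => (and_iff_right ⟨0, (zero_smul ℝ b).symm⟩).symm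

def ellipseH (ψ : Pl → Amb n) (q : Pl) (u : Fin 2 → Pl) : Amb n :=
  (2⁻¹ : ℝ) • (sff ψ q (u 0) (u 0) + sff ψ q (u 1) (u 1))

def ellipseB (ψ : Pl → Amb n) (q : Pl) (u : Fin 2 → Pl) : Amb n :=
  (2⁻¹ : ℝ) • (sff ψ q (u 0) (u 0) - sff ψ q (u 1) (u 1))

def ellipseC (ψ : Pl → Amb n) (q : Pl) (u : Fin 2 → Pl) : Amb n :=
  sff ψ q (u 0) (u 1)

theorem ellipseH_mem_nor (hψ : ContDiff ℝ (⊤ : ℕ∞) ψ) : ellipseH ψ q u ∈ Nor ψ q :=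
  Submodule.smul_mem _ _ (add_mem (sff_mem_nor hψ _ _) (sff_mem_nor hψ _ _))

theorem ellipseB_mem_nor (hψ : ContDiff ℝ (⊤ : ℕ∞) ψ) : ellipseB ψ q u ∈ Nor ψ q :=
  Submodule.smul_mem _ _ (sub_mem (sff_mem_nor hψ _ _) (sff_mem_nor hψ _ _))

theorem ellipseC_mem_nor (hψ : ContDiff ℝ (⊤ : ℕ∞) ψ) : ellipseC ψ q u ∈ Nor ψ q :=
  sff_mem_nor hψ _ _

theorem sff_smul_add_smul_self (hψ : ContDiff ℝ (⊤ : ℕ∞) ψ) {a b : ℝ} (hab : a ^ 2 + b ^ 2 = 1) :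
    sff ψ q (a • u 0 + b • u 1) (a • u 0 + b • u 1) =
      ellipseH ψ q u + (a ^ 2 - b ^ 2) • ellipseB ψ q u + (2 * a * b) • ellipseC ψ q u := by
  rw [sff_smul_add_smul hψ, ellipseH, ellipseB, ellipseC]
  match_scalars
  · linear_combination (2⁻¹ : ℝ) * hab
  · ring
  · linear_combination (2⁻¹ : ℝ) * hab

theorem ellipse_eq_ellipseOf (hψ : ContDiff ℝ (⊤ : ℕ∞) ψ)
    (hu : Orthonormal ℝ (fderiv ℝ ψ q ∘ u)) :
    Ellipse ψ q = ellipseOf (ellipseH ψ q u) (ellipseB ψ q u) (ellipseC ψ q u) := by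
  have hg : ∀ a b a' b' : ℝ, ⟪fderiv ℝ ψ q (a • u 0 + b • u 1),
      fderiv ℝ ψ q (a' • u 0 + b' • u 1)⟫ = a * a' + b * b' := hu.inner_smul_add_smul_of_comp
  have hunit : ∀ a b : ℝ, ‖fderiv ℝ ψ q (a • u 0 + b • u 1)‖ = 1 ↔ a ^ 2 + b ^ 2 = 1 := by
    intro a b
    rw [← pow_eq_one_iff_of_nonneg (norm_nonneg _) two_ne_zero, ← real_inner_self_eq_norm_sq,
      hg]
    ring_nf
  ext z
  constructor
  · rintro ⟨v, hv, rfl⟩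
    obtain ⟨a, b, rfl⟩ := hu.exists_eq_smul_add_smul_of_comp finrank_euclideanSpace_fin v
    have hab := (hunit a b).mp hv
    exact ⟨a, b, hab, sff_smul_add_smul_self hψ hab⟩
  · rintro ⟨a, b, hab, rfl⟩
    exact ⟨a • u 0 + b • u 1, (hunit a b).mpr hab, (sff_smul_add_smul_self hψ hab).symm⟩

theorem inner_sff_eq_inner_iff (hψ : ContDiff ℝ (⊤ : ℕ∞) ψ)
    (hu : Orthonormal ℝ (fderiv ℝ ψ q ∘ u)) (c : Amb n) :
    (∀ v w : Pl, ⟪c, sff ψ q v w⟫ = ⟪fderiv ℝ ψ q v, fderiv ℝ ψ q w⟫) ↔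
      ⟪c, ellipseH ψ q u⟫ = 1 ∧ ⟪c, ellipseB ψ q u⟫ = 0 ∧ ⟪c, ellipseC ψ q u⟫ = 0 := by
  have hg : ∀ a b a' b' : ℝ, ⟪fderiv ℝ ψ q (a • u 0 + b • u 1),
      fderiv ℝ ψ q (a' • u 0 + b' • u 1)⟫ = a * a' + b * b' := hu.inner_smul_add_smul_of_comp
  simp only [ellipseH, ellipseB, ellipseC, real_inner_smul_right, inner_add_right,
    inner_sub_right]
  constructor
  · intro h
    have ho : ∀ i j, ⟪fderiv ℝ ψ q (u i), fderiv ℝ ψ q (u j)⟫ = if i = j then 1 else 0 :=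
      orthonormal_iff_ite.mp hu
    simp only [h, ho, ↓reduceIte, zero_ne_one]
    norm_num
  · rintro ⟨hH, hB, hC⟩ v w
    obtain ⟨a, b, rfl⟩ := hu.exists_eq_smul_add_smul_of_comp finrank_euclideanSpace_fin v
    obtain ⟨a', b', rfl⟩ := hu.exists_eq_smul_add_smul_of_comp finrank_euclideanSpace_fin w
    rw [sff_smul_add_smul hψ, hg, inner_add_right, inner_add_right, real_inner_smul_right,
      real_inner_smul_right, real_inner_smul_right, hC]
    linear_combination (a * a' - b * b') * hB + (a * a' + b * b') * hH

end Surface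

/-- For an immersed surface in ℝ⁴ and a non-umbilic point `p`, there is a
unique vector `c_p ∈ N_pM` with `c_p·α_p = g_p` iff `p` is a semiumbilic point which is
not a point of inflection. -/
theorem statement_1 (ψ : Pl → Amb 4) (hψ : Immersion ψ) (q : Pl) (hq : ¬ Umbilic ψ q) :
    (∃! c : Amb 4, c ∈ Nor ψ q ∧
        ∀ v w : Pl, ⟪c, sff ψ q v w⟫ = ⟪fderiv ℝ ψ q v, fderiv ℝ ψ q w⟫) ↔
      (Semiumbilic ψ q ∧ ¬ Inflection ψ q) := by
  obtain ⟨hsmooth, hinj⟩ := hψ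
  obtain ⟨u, hu⟩ : ∃ u : Fin 2 → Pl, Orthonormal ℝ (fderiv ℝ ψ q ∘ u) :=
    (fderiv ℝ ψ q : Pl →ₗ[ℝ] Amb 4).exists_orthonormal_comp (hinj q) (by simp)
  have hE := ellipse_eq_ellipseOf hsmooth hu
  set H := ellipseH ψ q u
  set W := Submodule.span ℝ {ellipseB ψ q u, ellipseC ψ q u}
  have hWN : W ≤ Nor ψ q := Submodule.span_le.mpr <| Set.insert_subset_iff.mpr
    ⟨ellipseB_mem_nor hsmooth, Set.singleton_subset_iff.mpr (ellipseC_mem_nor hsmooth)⟩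
  have hW : W ≠ ⊥ := fun hW => hq ⟨H, by
    have h0 := Submodule.span_eq_bot.mp hW
    rw [hE, h0 (ellipseB ψ q u) (by simp), h0 (ellipseC ψ q u) (by simp), ellipseOf_zero_zero]⟩
  have hN : finrank ℝ (Nor ψ q) = 2 := by have := finrank_nor_add_two (hinj q); omega
  calc _ ↔ ∃! c, c ∈ Wᗮ ⊓ Nor ψ q ∧ ⟪c, H⟫ = 1 := existsUnique_congr fun c => by
        rw [inner_sff_eq_inner_iff hsmooth hu, Submodule.mem_inf,
          Submodule.mem_orthogonal_span_pair_iff]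
        tauto
    _ ↔ finrank ℝ W = 1 ∧ H ∉ W :=
        Submodule.existsUnique_mem_orthogonal_inf_inner_eq_one_iff hN hWN (ellipseH_mem_nor hsmooth)
    _ ↔ finrank ℝ W ≤ 1 ∧ ¬ finrank ℝ ↥((ℝ ∙ H) ⊔ W) ≤ 1 :=
        Submodule.finrank_eq_one_and_not_mem_iff hW H
    _ ↔ _ := by
        rw [semiumbilic_iff_collinear, inflection_iff_collinear_insert_zero, hE,
          collinear_iff_finrank_le_one, collinear_iff_finrank_le_one, vectorSpan_ellipseOf,
          vectorSpan_insert_zero, span_ellipseOf, Submodule.span_insert H]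
end
end

section
/- Let U and V be two surfaces immersed in ℝ⁴ and let f : U → V be a diffeomorphism such that for every p ∈ U one has T_pU = N_qV, where q = f(p) (and hence N_pU = T_qV). Then: a section Y of TU is parallel (∇^⊤Y = 0) if and only if Ỹ = Y∘f⁻¹, which is a section of NV, is parallel (∇^⊥Ỹ = 0); and a section u of NU is parallel if and only if u∘f⁻¹, which is a section of TV, is parallel. -/
/- Local framework: an immersed surface in ℝⁿ is given by a smooth parametrization
`ψ : Pl → Amb n` (`Pl = ℝ²` the parameter domain) whose differential is everywhere
injective.  Tangent/normal spaces, fundamental forms, connections, curvature ellipse,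
(semi)umbilic and inflection points, flatness, etc. are defined from `ψ`. -/

noncomputable section
open scoped RealInnerProductSpace

section ComplementaryPlanes

variable {n : ℕ} {ψ χ : Pl → Amb n}

theorem tproj_eq_nproj_of_tang_eq_nor {q : Pl} (h : Tang ψ q = Nor χ q) (x : Amb n) :
    tproj ψ q x = nproj χ q x := by
  have h' : (Tang ψ q).starProjection x = (Tang χ q)ᗮ.starProjection x := by
    simp_rw [h, Nor]
  exact h'.trans (Submodule.starProjection_orthogonal_val x)

theorem nproj_eq_tproj_of_tang_eq_nor {q : Pl} (h : Tang ψ q = Nor χ q) (x : Amb n) :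
    nproj ψ q x = tproj χ q x := by
  rw [nproj, tproj_eq_nproj_of_tang_eq_nor h, nproj, sub_sub_cancel]

theorem parallelT_iff_parallelN_of_tang_eq_nor (h : ∀ q, Tang ψ q = Nor χ q)
    (F : Pl → Amb n) : ParallelT ψ F ↔ ParallelN χ F := by
  simp only [ParallelT, ParallelN, tproj_eq_nproj_of_tang_eq_nor (h _)]

theorem parallelN_iff_parallelT_of_tang_eq_nor (h : ∀ q, Tang ψ q = Nor χ q)
    (F : Pl → Amb n) : ParallelN ψ F ↔ ParallelT χ F := by
  simp only [ParallelT, ParallelN, nproj_eq_tproj_of_tang_eq_nor (h _)]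

end ComplementaryPlanes

-- `V` is parametrized by `χ = f ∘ ψ`, so `f` is the identity in parameters and `Y ∘ f⁻¹` is `Y`.
theorem statement_4_general (ψ χ : Pl → Amb 4)
    (hTN : ∀ q, Tang ψ q = Nor χ q) :
    (∀ Y : Pl → Amb 4, TangentField ψ Y → (ParallelT ψ Y ↔ ParallelN χ Y)) ∧
    (∀ u : Pl → Amb 4, NormalField ψ u → (ParallelN ψ u ↔ ParallelT χ u)) :=
  ⟨fun Y _ => parallelT_iff_parallelN_of_tang_eq_nor hTN Y,
    fun u _ => parallelN_iff_parallelT_of_tang_eq_nor hTN u⟩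

/-- Let `U, V` be surfaces in ℝ⁴ and `f : U → V` a diffeomorphism with
`T_pU = N_{f(p)}V` for all `p` (here `V` is parametrized by `χ`, the composition of `f`
with the parametrization `ψ` of `U`, so that `f` is the identity in parameters).
A section `Y` of `TU` is parallel iff `Y∘f⁻¹`, a section of `NV`, is parallel; and a
section `u` of `NU` is parallel iff `u∘f⁻¹`, a section of `TV`, is parallel. -/
theorem statement_4 (ψ χ : Pl → Amb 4) (hψ : Immersion ψ) (hχ : Immersion χ)
    (hTN : ∀ q, Tang ψ q = Nor χ q) :
    (∀ Y : Pl → Amb 4, TangentField ψ Y → (ParallelT ψ Y ↔ ParallelN χ Y)) ∧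
    (∀ u : Pl → Amb 4, NormalField ψ u → (ParallelN ψ u ↔ ParallelT χ u)) :=
  statement_4_general ψ χ hTN
end
end

section
/- Let M be an immersed surface in ℝⁿ with normal bundle NM and first and second fundamental forms g and α. Let c be a section of NM and define f = id + c : M → ℝⁿ, i.e. f(p) = p + c_p. Then c·α = g (meaning ⟨c_p, α_p(X,Y)⟩ = ⟨X,Y⟩ for all p ∈ M and X,Y ∈ T_pM) if and only if df(T_pM) ⊂ N_pM for every p ∈ M. -/
/- Local framework: an immersed surface in ℝⁿ is given by a smooth parametrization
`ψ : Pl → Amb n` (`Pl = ℝ²` the parameter domain) whose differential is everywhere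
injective.  Tangent/normal spaces, fundamental forms, connections, curvature ellipse,
(semi)umbilic and inflection points, flatness, etc. are defined from `ψ`. -/

noncomputable section
open scoped RealInnerProductSpace

/-
Differentiating `⟪c, ∂_w ψ⟫ = 0` gives the Weingarten relation `⟪c, α(∂_v ψ, ∂_w ψ)⟫ = -⟪∂_v c, ∂_w ψ⟫`.
Hence `c·α = g` says exactly that `⟪∂_v ψ + ∂_v c, ∂_w ψ⟫ = 0` for all `v, w`, i.e. that
`df(∂_v) = ∂_v ψ + ∂_v c` is normal.
-/

section Weingarten

variable {n : ℕ} {ψ : Pl → Amb n} {q : Pl}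

theorem mem_nor_iff {x : Amb n} : x ∈ Nor ψ q ↔ ∀ w, ⟪fderiv ℝ ψ q w, x⟫ = 0 := by
  simp [Nor, Tang, Submodule.mem_orthogonal]

theorem inner_nproj_of_mem_nor {u : Amb n} (hu : u ∈ Nor ψ q) (x : Amb n) :
    ⟪u, nproj ψ q x⟫ = ⟪u, x⟫ := by
  have htang : ⟪u, tproj ψ q x⟫ = 0 :=
    Submodule.inner_left_of_mem_orthogonal (Submodule.coe_mem _) hu
  rw [nproj, inner_sub_right, htang, sub_zero]

theorem inner_sff_eq_neg_inner_fderiv (hψ : ContDiff ℝ 2 ψ) {c : Pl → Amb n}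
    (hc : DifferentiableAt ℝ c q) (hnor : ∀ x, c x ∈ Nor ψ x) (v w : Pl) :
    ⟪c q, sff ψ q v w⟫ = -⟪fderiv ℝ c q v, fderiv ℝ ψ q w⟫ := by
  have hdψ : DifferentiableAt ℝ (fun x => fderiv ℝ ψ x w) q :=
    ((hψ.fderiv_right (m := 1) le_rfl).clm_apply contDiff_const).differentiable one_ne_zero q
  have horth : (fun x => ⟪c x, fderiv ℝ ψ x w⟫) = fun _ => 0 := by
    funext x
    rw [real_inner_comm]
    exact mem_nor_iff.mp (hnor x) w
  have hderiv : fderiv ℝ (fun x => ⟪c x, fderiv ℝ ψ x w⟫) q v = 0 := by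
    simp [horth]
  rw [fderiv_inner_apply ℝ hc hdψ] at hderiv
  rw [sff, inner_nproj_of_mem_nor (hnor q)]
  linarith

end Weingarten

/-- For an immersed surface in ℝⁿ and a normal section `c`, putting
`f = id + c`, one has `c·α = g` iff `df(T_pM) ⊆ N_pM` for every `p`. -/
theorem statement_7 {n : ℕ} (ψ : Pl → Amb n) (hψ : Immersion ψ)
    (c : Pl → Amb n) (hc : NormalField ψ c) :
    CAG ψ c ↔ ∀ q (v : Pl), fderiv ℝ (fun x => ψ x + c x) q v ∈ Nor ψ q := by
  have hcd : Differentiable ℝ c := hc.1.differentiable (by simp)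
  have hdf : ∀ q v, fderiv ℝ (fun x => ψ x + c x) q v = fderiv ℝ ψ q v + fderiv ℝ c q v :=
    fun q v => by
      rw [fderiv_fun_add (hψ.1.differentiable (by simp) q) (hcd q)]
      rfl
  have hweingarten q := inner_sff_eq_neg_inner_fderiv (hψ.1.of_le ENat.LEInfty.out) (hcd q) hc.2
  simp only [CAG, hdf, mem_nor_iff, inner_add_right, hweingarten]
  refine forall_congr' fun q => forall_congr' fun v => forall_congr' fun w => ?_
  rw [real_inner_comm (fderiv ℝ ψ q w), real_inner_comm (fderiv ℝ ψ q w)]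
  constructor <;> intro h <;> linarith
end
end

section
/- Let M be a flat semiumbilical surface in ℝ⁴ and let c be the normal section with c·α = g. Then there is a unique tangent vector field j on M such that α(j,X) = ∇^⊥_X c for every tangent field X, and it is given by j = ½ grad(⟨c,c⟩); in a local orthonormal frame (t₁,t₂) of asymptotic directions with b₁ = α(t₁,t₁), b₂ = α(t₂,t₂), one has j = (⟨b₁, D_{t₁}c⟩/⟨b₁,b₁⟩) t₁ + (⟨b₂, D_{t₂}c⟩/⟨b₂,b₂⟩) t₂. -/
/- Local framework: an immersed surface in ℝⁿ is given by a smooth parametrization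
`ψ : Pl → Amb n` (`Pl = ℝ²` the parameter domain) whose differential is everywhere
injective.  Tangent/normal spaces, fundamental forms, connections, curvature ellipse,
(semi)umbilic and inflection points, flatness, etc. are defined from `ψ`. -/

noncomputable section
open scoped RealInnerProductSpace

/-!
Since `c` is normal, `c·α = g` says that the tangential part of `D_X c` is `-X`.
Differentiating `⟪c, j⟫ = 0` then shows that every solution `j` of `α(j, X) = ∇^⊥_X c`
satisfies `⟪j, X⟫ = ⟪c, D_X c⟫ = ½ X⟪c, c⟫`; this gives both uniqueness and `j = ½ grad⟪c, c⟫`.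

For existence, flatness gives through the Gauss equation
`⟪b₁, b₂⟫ = ⟪α(t₂, t₁), α(t₁, t₂)⟫ = 0`, and `⟪c, bᵢ⟫ = 1` shows `bᵢ ≠ 0`, so `(b₁, b₂)` is an
orthogonal basis of the normal plane. The Codazzi equation for `c` gives
`⟪∇^⊥_{t₁} c, b₂⟫ = ⟪∇^⊥_{t₂} c, α(t₁, t₂)⟫ = 0`, so `∇^⊥_{tᵢ} c` is the multiple of `bᵢ` appearing
in the formula, and that field solves the equation on both frame vectors.
-/

namespace ImmersedSurface

section Calculus

variable {E F G : Type*} [NormedAddCommGroup E] [NormedSpace ℝ E]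
  [NormedAddCommGroup F] [NormedSpace ℝ F] [NormedAddCommGroup G] [NormedSpace ℝ G]

theorem contDiff_fderiv {f : E → F} (hf : ContDiff ℝ (⊤ : ℕ∞) f) :
    ContDiff ℝ (⊤ : ℕ∞) (fderiv ℝ f) :=
  hf.fderiv_right (by exact_mod_cast le_rfl)

theorem fderiv_clm_apply_const {c : E → F →L[ℝ] G} {x : E} (hc : DifferentiableAt ℝ c x)
    (w : F) (v : E) : fderiv ℝ (fun y => c y w) x v = fderiv ℝ c x v w := by
  simp [fderiv_clm_apply hc (differentiableAt_const w)]

theorem fderiv_fderiv_apply_comm {g : E → F} (hg : ContDiff ℝ (⊤ : ℕ∞) g) (x a b : E) :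
    fderiv ℝ (fun y => fderiv ℝ g y a) x b = fderiv ℝ (fun y => fderiv ℝ g y b) x a := by
  have hd := (contDiff_fderiv hg).differentiable (by simp) x
  rw [fderiv_clm_apply_const hd, fderiv_clm_apply_const hd]
  exact (hg.contDiffAt.isSymmSndFDerivAt (by
    simp only [minSmoothness_of_isRCLikeNormedField]; exact WithTop.coe_le_coe.2 le_top)) b a

theorem inner_fderiv_eq_neg_of_inner_eq_zero {H : Type*} [NormedAddCommGroup H]
    [InnerProductSpace ℝ H] {f g : E → H} {x : E}
    (hf : DifferentiableAt ℝ f x) (hg : DifferentiableAt ℝ g x) (h : ∀ y, ⟪f y, g y⟫ = 0)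
    (v : E) : ⟪fderiv ℝ f x v, g x⟫ = -⟪f x, fderiv ℝ g x v⟫ := by
  have hd := fderiv_inner_apply ℝ hf hg v
  rw [show (fun y => ⟪f y, g y⟫) = fun _ => (0 : ℝ) from funext h] at hd
  simp only [fderiv_const_apply, zero_apply] at hd
  linarith

end Calculus

section OrthogonalPair

variable {E : Type*} [NormedAddCommGroup E] [InnerProductSpace ℝ E]

theorem starProjection_eq_of_eq_span_pair {K : Submodule ℝ E} [K.HasOrthogonalProjection]
    {b₁ b₂ : E} (hK : K = Submodule.span ℝ {b₁, b₂}) (h : ⟪b₁, b₂⟫ = 0) (x : E) :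
    K.starProjection x = (⟪x, b₁⟫ / ⟪b₁, b₁⟫) • b₁ + (⟪x, b₂⟫ / ⟪b₂, b₂⟫) • b₂ := by
  have hK₁ : b₁ ∈ K := hK ▸ Submodule.subset_span (by simp)
  have hK₂ : b₂ ∈ K := hK ▸ Submodule.subset_span (by simp)
  -- also true for `b = 0`, since `0 / 0 = 0`
  have hcancel : ∀ b : E, ⟪x, b⟫ / ⟪b, b⟫ * ⟪b, b⟫ = ⟪x, b⟫ := fun b => by
    rcases eq_or_ne b 0 with rfl | hb
    · simp
    · exact div_mul_cancel₀ _ (inner_self_ne_zero.2 hb)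
  refine Submodule.eq_starProjection_of_mem_of_inner_eq_zero
    (K.add_mem (K.smul_mem _ hK₁) (K.smul_mem _ hK₂)) fun w hw => ?_
  obtain ⟨a₁, a₂, rfl⟩ := Submodule.mem_span_pair.1 (hK ▸ hw)
  simp only [inner_sub_left, inner_add_left, inner_add_right, real_inner_smul_left,
    real_inner_smul_right, real_inner_comm b₁ b₂, h]
  linear_combination -a₁ * hcancel b₁ - a₂ * hcancel b₂

theorem span_pair_eq_of_finrank_eq_two {K : Submodule ℝ E} (hK : Module.finrank ℝ K = 2)
    {b₁ b₂ : E} (hb₁ : b₁ ∈ K) (hb₂ : b₂ ∈ K) (h₁ : b₁ ≠ 0) (h₂ : b₂ ≠ 0)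
    (h : ⟪b₁, b₂⟫ = 0) : Submodule.span ℝ {b₁, b₂} = K := by
  have : FiniteDimensional ℝ K := Module.finite_of_finrank_eq_succ hK
  have hli : LinearIndependent ℝ ![b₁, b₂] := by
    refine linearIndependent_of_ne_zero_of_inner_eq_zero (fun i => ?_) fun i j hij => ?_
    · fin_cases i <;> simpa
    · fin_cases i <;> fin_cases j <;> simp_all [real_inner_comm]
  refine Submodule.eq_of_le_of_finrank_eq (Submodule.span_le.2 ?_) ?_
  · rintro x (rfl | rfl) <;> assumption
  · rw [hK, ← Matrix.range_cons_cons_empty, finrank_span_eq_card hli, Fintype.card_fin]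

end OrthogonalPair

section Surface

variable {n : ℕ} {ψ : Pl → Amb n} {q : Pl}

theorem tproj_eq_starProjection : tproj ψ q = (Tang ψ q).starProjection := rfl

theorem nproj_eq_starProjection : nproj ψ q = (Nor ψ q).starProjection := by
  funext x
  simp [nproj, tproj, Nor, Submodule.starProjection_orthogonal']

theorem tproj_add_nproj (x : Amb n) : tproj ψ q x + nproj ψ q x = x := add_sub_cancel _ _

theorem mem_tang_iff {x : Amb n} : x ∈ Tang ψ q ↔ ∃ s, fderiv ℝ ψ q s = x := LinearMap.mem_range

theorem fderiv_mem_tang (v : Pl) : fderiv ℝ ψ q v ∈ Tang ψ q := mem_tang_iff.2 ⟨v, rfl⟩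

theorem nproj_mem_nor (x : Amb n) : nproj ψ q x ∈ Nor ψ q := by
  rw [nproj_eq_starProjection]; exact Submodule.starProjection_apply_mem _ x

theorem nproj_eq_zero_of_mem_tang {x : Amb n} (hx : x ∈ Tang ψ q) : nproj ψ q x = 0 := by
  rw [nproj, tproj_eq_starProjection, Submodule.starProjection_eq_self_iff.2 hx, sub_self]

theorem inner_nproj_right_of_mem_nor {z : Amb n} (hz : z ∈ Nor ψ q) (x : Amb n) :
    ⟪z, nproj ψ q x⟫ = ⟪z, x⟫ := by
  rw [nproj_eq_starProjection, ← Submodule.inner_starProjection_left_eq_right,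
    Submodule.starProjection_eq_self_iff.2 hz]

theorem sff_eq (hs : ContDiff ℝ (⊤ : ℕ∞) ψ) (q v w : Pl) :
    sff ψ q v w = nproj ψ q (fderiv ℝ (fderiv ℝ ψ) q v w) := by
  rw [sff, fderiv_clm_apply_const ((contDiff_fderiv hs).differentiable (by simp) q)]

theorem sff_mem_nor (v w : Pl) : sff ψ q v w ∈ Nor ψ q := nproj_mem_nor _

theorem sff_comm (hs : ContDiff ℝ (⊤ : ℕ∞) ψ) (q v w : Pl) : sff ψ q v w = sff ψ q w v := by
  rw [sff, sff, fderiv_fderiv_apply_comm hs]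

theorem sff_add_left (hs : ContDiff ℝ (⊤ : ℕ∞) ψ) (q a b w : Pl) :
    sff ψ q (a + b) w = sff ψ q a w + sff ψ q b w := by
  simp only [sff_eq hs, nproj_eq_starProjection, map_add, add_apply]

theorem sff_smul_left (hs : ContDiff ℝ (⊤ : ℕ∞) ψ) (q : Pl) (r : ℝ) (a w : Pl) :
    sff ψ q (r • a) w = r • sff ψ q a w := by
  simp only [sff_eq hs, nproj_eq_starProjection, map_smul, smul_apply]

theorem sff_add_right (hs : ContDiff ℝ (⊤ : ℕ∞) ψ) (q v a b : Pl) :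
    sff ψ q v (a + b) = sff ψ q v a + sff ψ q v b := by
  rw [sff_comm hs, sff_add_left hs, sff_comm hs, sff_comm hs q b]

theorem sff_smul_right (hs : ContDiff ℝ (⊤ : ℕ∞) ψ) (q : Pl) (r : ℝ) (v a : Pl) :
    sff ψ q v (r • a) = r • sff ψ q v a := by
  rw [sff_comm hs, sff_smul_left hs, sff_comm hs]

theorem nproj_fderiv_dpsi_comp (hs : ContDiff ℝ (⊤ : ℕ∞) ψ) {W : Pl → Pl}
    (hW : DifferentiableAt ℝ W q) (v : Pl) :
    nproj ψ q (fderiv ℝ (fun x => fderiv ℝ ψ x (W x)) q v) = sff ψ q v (W q) := by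
  rw [fderiv_clm_apply ((contDiff_fderiv hs).differentiable (by simp) q) hW, sff_eq hs]
  simp only [add_apply, ContinuousLinearMap.coe_comp, Function.comp_apply,
    ContinuousLinearMap.flip_apply, nproj_eq_starProjection, map_add]
  rw [← nproj_eq_starProjection, nproj_eq_zero_of_mem_tang (fderiv_mem_tang _), zero_add]

theorem inner_fderiv_dpsi_of_normal (hs : ContDiff ℝ (⊤ : ℕ∞) ψ) {u : Pl → Amb n}
    (hu : Differentiable ℝ u) (hun : ∀ x, u x ∈ Nor ψ x) (q v w : Pl) :
    ⟪fderiv ℝ u q v, fderiv ℝ ψ q w⟫ = -⟪u q, sff ψ q v w⟫ := by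
  have hdψ : Differentiable ℝ fun x => fderiv ℝ ψ x w :=
    ((contDiff_fderiv hs).clm_apply contDiff_const).differentiable (by simp)
  rw [inner_fderiv_eq_neg_of_inner_eq_zero (hu q) (hdψ q)
    (fun x => Submodule.inner_left_of_mem_orthogonal (fderiv_mem_tang w) (hun x)),
    sff, inner_nproj_right_of_mem_nor (hun q)]

end Surface

section CAG

variable {n : ℕ} {ψ c : Pl → Amb n}

theorem sff_self_ne_zero_of_cag (hcg : CAG ψ c) {q t : Pl} (ht : fderiv ℝ ψ q t ≠ 0) :
    sff ψ q t t ≠ 0 := by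
  intro h
  have := hcg q t t
  rw [h, inner_zero_right] at this
  exact ht (inner_self_eq_zero.1 this.symm)

variable (hs : ContDiff ℝ (⊤ : ℕ∞) ψ) (hc : NormalField ψ c) (hcg : CAG ψ c)
include hs hc hcg

theorem inner_fderiv_dpsi_of_cag (q v w : Pl) :
    ⟪fderiv ℝ c q v, fderiv ℝ ψ q w⟫ = -⟪fderiv ℝ ψ q v, fderiv ℝ ψ q w⟫ := by
  rw [inner_fderiv_dpsi_of_normal hs (hc.1.differentiable (by simp)) hc.2, hcg]

theorem tproj_fderiv_of_cag (q v : Pl) : tproj ψ q (fderiv ℝ c q v) = -fderiv ℝ ψ q v := by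
  refine Submodule.eq_starProjection_of_mem_of_inner_eq_zero (neg_mem (fderiv_mem_tang v)) ?_
  intro x hx
  obtain ⟨w, rfl⟩ := mem_tang_iff.1 hx
  rw [sub_neg_eq_add, inner_add_left]
  exact add_eq_zero_iff_eq_neg.2 (inner_fderiv_dpsi_of_cag hs hc hcg q v w)

theorem inner_fderiv_of_cag (q v : Pl) (y : Amb n) :
    ⟪fderiv ℝ c q v, y⟫ = -⟪fderiv ℝ ψ q v, y⟫ + ⟪nproj ψ q (fderiv ℝ c q v), nproj ψ q y⟫ := by
  conv_lhs => rw [← tproj_add_nproj (fderiv ℝ c q v), tproj_fderiv_of_cag hs hc hcg]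
  rw [inner_add_left, inner_neg_left, inner_nproj_right_of_mem_nor (nproj_mem_nor _)]

/-- Codazzi equation for `c`, obtained by differentiating `⟪c, ∂_u ∂_w ψ⟫ = ⟪∂_u ψ, ∂_w ψ⟫`. -/
theorem inner_nproj_fderiv_sff_comm (q u v w : Pl) :
    ⟪nproj ψ q (fderiv ℝ c q v), sff ψ q u w⟫ = ⟪nproj ψ q (fderiv ℝ c q u), sff ψ q v w⟫ := by
  have hg : ∀ a, ContDiff ℝ (⊤ : ℕ∞) fun x => fderiv ℝ ψ x a := fun a =>
    (contDiff_fderiv hs).clm_apply contDiff_const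
  have hderiv : ∀ a b : Pl,
      ⟪c q, fderiv ℝ (fun x => fderiv ℝ (fun y => fderiv ℝ ψ y w) x a) q b⟫
        + ⟪fderiv ℝ c q b, fderiv ℝ (fun y => fderiv ℝ ψ y w) q a⟫
      = ⟪fderiv ℝ ψ q a, fderiv ℝ (fun y => fderiv ℝ ψ y w) q b⟫
        + ⟪fderiv ℝ (fun y => fderiv ℝ ψ y a) q b, fderiv ℝ ψ q w⟫ := by
    intro a b
    have hid : (fun x => ⟪c x, fderiv ℝ (fun y => fderiv ℝ ψ y w) x a⟫)
        = fun x => ⟪fderiv ℝ ψ x a, fderiv ℝ ψ x w⟫ := by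
      funext x
      rw [← hcg x a w, sff, inner_nproj_right_of_mem_nor (hc.2 x)]
    have := congrArg (fun f => fderiv ℝ f q b) hid
    rwa [fderiv_inner_apply ℝ (hc.1.differentiable (by simp) q)
        (((contDiff_fderiv (hg w)).clm_apply contDiff_const).differentiable (by simp) q),
      fderiv_inner_apply ℝ ((hg a).differentiable (by simp) q)
        ((hg w).differentiable (by simp) q)] at this
  have h₁ := hderiv u v
  have h₂ := hderiv v u
  rw [fderiv_fderiv_apply_comm (hg w) q u v, fderiv_fderiv_apply_comm hs q u v,
    inner_fderiv_of_cag hs hc hcg q v] at h₁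
  rw [inner_fderiv_of_cag hs hc hcg q u] at h₂
  rw [sff, sff]
  linarith

end CAG

section Representation

variable {n : ℕ} {ψ c j j' : Pl → Amb n}

/-- For a tangent field `j`, `(D_X j)^⊥ = α(X, j)`, so this is the paper's equation
`α(j, X) = ∇^⊥_X c`. -/
def RepresentsNormalDeriv (ψ c j : Pl → Amb n) : Prop :=
  TangentField ψ j ∧ ∀ q (v : Pl), nproj ψ q (fderiv ℝ j q v) = nproj ψ q (fderiv ℝ c q v)

variable (hs : ContDiff ℝ (⊤ : ℕ∞) ψ) (hc : NormalField ψ c) (hcg : CAG ψ c)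
include hs hc hcg

theorem RepresentsNormalDeriv.inner_dpsi (hj : RepresentsNormalDeriv ψ c j) (q v : Pl) :
    ⟪j q, fderiv ℝ ψ q v⟫ = ⟪c q, fderiv ℝ c q v⟫ := by
  obtain ⟨s, hjs⟩ := mem_tang_iff.1 (hj.1.2 q)
  calc ⟪j q, fderiv ℝ ψ q v⟫ = -⟪fderiv ℝ c q v, j q⟫ := by
        rw [← hjs, inner_fderiv_dpsi_of_cag hs hc hcg, real_inner_comm, neg_neg]
    _ = ⟪c q, fderiv ℝ j q v⟫ := by
        rw [inner_fderiv_eq_neg_of_inner_eq_zero (hc.1.differentiable (by simp) q)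
          (hj.1.1.differentiable (by simp) q)
          (fun x => Submodule.inner_left_of_mem_orthogonal (hj.1.2 x) (hc.2 x)), neg_neg]
    _ = ⟪c q, fderiv ℝ c q v⟫ := by
        rw [← inner_nproj_right_of_mem_nor (hc.2 q), hj.2, inner_nproj_right_of_mem_nor (hc.2 q)]

theorem RepresentsNormalDeriv.unique (hj : RepresentsNormalDeriv ψ c j)
    (hj' : RepresentsNormalDeriv ψ c j') : j = j' := by
  funext q
  obtain ⟨s, hs'⟩ := mem_tang_iff.1 ((Tang ψ q).sub_mem (hj.1.2 q) (hj'.1.2 q))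
  have h : ⟪j q - j' q, fderiv ℝ ψ q s⟫ = 0 := by
    rw [inner_sub_left, hj.inner_dpsi hs hc hcg, hj'.inner_dpsi hs hc hcg, sub_self]
  rw [hs'] at h
  exact sub_eq_zero.1 (inner_self_eq_zero.1 h)

theorem RepresentsNormalDeriv.halfGradCSq (hj : RepresentsNormalDeriv ψ c j) :
    HalfGradCSq ψ c j := by
  refine ⟨hj.1, fun q v => ?_⟩
  have hcd := hc.1.differentiable (by simp) q
  rw [fderiv_inner_apply ℝ hcd hcd, hj.inner_dpsi hs hc hcg, real_inner_comm (fderiv ℝ c q v)]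
  ring

end Representation

section Frame

variable {n : ℕ} {ψ : Pl → Amb n} {q : Pl}

theorem finrank_tang (hinj : Function.Injective (fderiv ℝ ψ q)) :
    Module.finrank ℝ (Tang ψ q) = 2 := by
  rw [Tang, LinearMap.finrank_range_of_inj hinj, finrank_euclideanSpace_fin]

theorem finrank_nor {ψ : Pl → Amb 4} (hinj : Function.Injective (fderiv ℝ ψ q)) :
    Module.finrank ℝ (Nor ψ q) = 2 := by
  have := (Tang ψ q).finrank_add_finrank_orthogonal
  rw [finrank_tang hinj, finrank_euclideanSpace_fin] at this
  rw [Nor]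
  omega

variable {t₁ t₂ : Pl} (hinj : Function.Injective (fderiv ℝ ψ q))
  (h₁ : ‖fderiv ℝ ψ q t₁‖ = 1) (h₂ : ‖fderiv ℝ ψ q t₂‖ = 1)
  (h₁₂ : ⟪fderiv ℝ ψ q t₁, fderiv ℝ ψ q t₂⟫ = 0)
include hinj h₁ h₂ h₁₂

theorem tproj_eq_frame (x : Amb n) :
    tproj ψ q x
      = ⟪x, fderiv ℝ ψ q t₁⟫ • fderiv ℝ ψ q t₁ + ⟪x, fderiv ℝ ψ q t₂⟫ • fderiv ℝ ψ q t₂ := by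
  have hne : ∀ {t : Pl}, ‖fderiv ℝ ψ q t‖ = 1 → fderiv ℝ ψ q t ≠ 0 := fun h =>
    ne_zero_of_norm_ne_zero (h ▸ one_ne_zero)
  have hunit : ∀ {t : Pl}, ‖fderiv ℝ ψ q t‖ = 1 → ⟪fderiv ℝ ψ q t, fderiv ℝ ψ q t⟫ = 1 :=
    fun h => by rw [real_inner_self_eq_norm_sq, h, one_pow]
  rw [tproj_eq_starProjection, starProjection_eq_of_eq_span_pair
    (span_pair_eq_of_finrank_eq_two (finrank_tang hinj) (fderiv_mem_tang t₁)
      (fderiv_mem_tang t₂) (hne h₁) (hne h₂) h₁₂).symm h₁₂, hunit h₁, hunit h₂, div_one, div_one]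

theorem eq_frame_coords (v : Pl) :
    v = ⟪fderiv ℝ ψ q v, fderiv ℝ ψ q t₁⟫ • t₁ + ⟪fderiv ℝ ψ q v, fderiv ℝ ψ q t₂⟫ • t₂ := by
  apply hinj
  rw [map_add, map_smul, map_smul, ← tproj_eq_frame hinj h₁ h₂ h₁₂, tproj_eq_starProjection,
    Submodule.starProjection_eq_self_iff.2 (fderiv_mem_tang v)]

end Frame

structure IsOrthonormalFrame {n : ℕ} (ψ : Pl → Amb n) (T₁ T₂ : Pl → Pl) : Prop where
  contDiff_fst : ContDiff ℝ (⊤ : ℕ∞) T₁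
  contDiff_snd : ContDiff ℝ (⊤ : ℕ∞) T₂
  norm_fst : ∀ q, ‖fderiv ℝ ψ q (T₁ q)‖ = 1
  norm_snd : ∀ q, ‖fderiv ℝ ψ q (T₂ q)‖ = 1
  inner_eq_zero : ∀ q, ⟪fderiv ℝ ψ q (T₁ q), fderiv ℝ ψ q (T₂ q)⟫ = 0

section Gauss

variable {n : ℕ} {ψ : Pl → Amb n} {T₁ T₂ : Pl → Pl} (hψ : Immersion ψ)
  (hT : IsOrthonormalFrame ψ T₁ T₂)
include hψ hT

theorem IsOrthonormalFrame.contDiff_nproj {Y : Pl → Amb n} (hY : ContDiff ℝ (⊤ : ℕ∞) Y) :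
    ContDiff ℝ (⊤ : ℕ∞) fun x => nproj ψ x (Y x) := by
  have hE : ∀ {T : Pl → Pl}, ContDiff ℝ (⊤ : ℕ∞) T →
      ContDiff ℝ (⊤ : ℕ∞) fun x => fderiv ℝ ψ x (T x) := fun hT' =>
    (contDiff_fderiv hψ.1).clm_apply hT'
  have heq : (fun x => nproj ψ x (Y x)) = fun x => Y x -
      (⟪Y x, fderiv ℝ ψ x (T₁ x)⟫ • fderiv ℝ ψ x (T₁ x)
        + ⟪Y x, fderiv ℝ ψ x (T₂ x)⟫ • fderiv ℝ ψ x (T₂ x)) := funext fun x => by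
    rw [nproj, tproj_eq_frame (hψ.2 x) (hT.norm_fst x) (hT.norm_snd x) (hT.inner_eq_zero x)]
  rw [heq]
  exact hY.sub (((hY.inner ℝ (hE hT.contDiff_fst)).smul (hE hT.contDiff_fst)).add
    ((hY.inner ℝ (hE hT.contDiff_snd)).smul (hE hT.contDiff_snd)))

variable (hflat : FlatSurface ψ)
include hflat

/-- The Gauss equation in coordinate directions: flatness tested on the tangent field `∂_u ψ`. -/
theorem inner_sff_single_comm_of_flat (q u w : Pl) :
    ⟪sff ψ q (EuclideanSpace.single 1 1) u, sff ψ q (EuclideanSpace.single 0 1) w⟫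
      = ⟪sff ψ q (EuclideanSpace.single 0 1) u, sff ψ q (EuclideanSpace.single 1 1) w⟫ := by
  have hs := hψ.1
  set e : Fin 2 → Pl := fun i => EuclideanSpace.single i 1
  set g : Pl → Amb n := fun x => fderiv ℝ ψ x u
  have hg : ContDiff ℝ (⊤ : ℕ∞) g := (contDiff_fderiv hs).clm_apply contDiff_const
  have hg' : ∀ i, ContDiff ℝ (⊤ : ℕ∞) fun x => fderiv ℝ g x (e i) := fun i =>
    (contDiff_fderiv hg).clm_apply contDiff_const
  set B : Fin 2 → Pl → Amb n := fun i x => sff ψ x (e i) u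
  have hB : ∀ i, ContDiff ℝ (⊤ : ℕ∞) (B i) := fun i => hT.contDiff_nproj hψ (hg' i)
  have hcovT : ∀ i j, covT ψ (covT ψ g j) i q
      = tproj ψ q (fderiv ℝ (fun x => fderiv ℝ g x (e j)) q (e i))
        - tproj ψ q (fderiv ℝ (B j) q (e i)) := by
    intro i j
    have hg_j : covT ψ g j = fun x => fderiv ℝ g x (e j) - B j x :=
      funext fun x => eq_sub_of_add_eq (tproj_add_nproj _)
    rw [covT, hg_j, fderiv_fun_sub ((hg' j).differentiable (by simp) q)
      ((hB j).differentiable (by simp) q), sub_apply,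
      tproj_eq_starProjection, map_sub]
  have hflat' := hflat g ⟨hg, fun _ => fderiv_mem_tang u⟩ q
  rw [hcovT, hcovT, fderiv_fderiv_apply_comm hg q (e 1) (e 0)] at hflat'
  have hpair : ∀ i j, ⟪tproj ψ q (fderiv ℝ (B j) q (e i)), fderiv ℝ ψ q w⟫
      = -⟪sff ψ q (e j) u, sff ψ q (e i) w⟫ := by
    intro i j
    rw [tproj_eq_starProjection, Submodule.inner_starProjection_left_eq_right,
      Submodule.starProjection_eq_self_iff.2 (fderiv_mem_tang w),
      inner_fderiv_dpsi_of_normal hs ((hB j).differentiable (by simp)) fun x => sff_mem_nor _ _]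
  have h₀₁ := hpair 0 1
  rw [sub_right_injective hflat', hpair 1 0] at h₀₁
  linarith

theorem inner_sff_comm_of_flat (q x y u w : Pl) :
    ⟪sff ψ q x u, sff ψ q y w⟫ = ⟪sff ψ q y u, sff ψ q x w⟫ := by
  have hdecomp : ∀ z u' : Pl, sff ψ q z u' = z 0 • sff ψ q (EuclideanSpace.single 0 1) u'
      + z 1 • sff ψ q (EuclideanSpace.single 1 1) u' := by
    intro z u'
    have hz : z = z 0 • EuclideanSpace.single 0 1 + z 1 • EuclideanSpace.single 1 1 := by
      ext i
      fin_cases i <;> simp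
    conv_lhs => rw [hz]
    rw [sff_add_left hψ.1, sff_smul_left hψ.1, sff_smul_left hψ.1]
  have h := inner_sff_single_comm_of_flat hψ hT hflat q u w
  rw [hdecomp x u, hdecomp y w, hdecomp y u, hdecomp x w]
  simp only [inner_add_left, inner_add_right, real_inner_smul_left, real_inner_smul_right]
  linear_combination (x 1 * y 0 - x 0 * y 1) * h

end Gauss

section Existence

variable {ψ c : Pl → Amb 4} {T₁ T₂ : Pl → Pl}

theorem nproj_fderiv_of_sff_eq_zero (hψ : Immersion ψ) (hc : NormalField ψ c) (hcg : CAG ψ c)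
    {q t t' : Pl} (ht : fderiv ℝ ψ q t ≠ 0) (ht' : fderiv ℝ ψ q t' ≠ 0)
    (h₀ : sff ψ q t t' = 0) (horth : ⟪sff ψ q t t, sff ψ q t' t'⟫ = 0) :
    nproj ψ q (fderiv ℝ c q t)
      = (⟪sff ψ q t t, fderiv ℝ c q t⟫ / ⟪sff ψ q t t, sff ψ q t t⟫) • sff ψ q t t := by
  have hspan := span_pair_eq_of_finrank_eq_two (finrank_nor (hψ.2 q)) (sff_mem_nor t t)
    (sff_mem_nor t' t') (sff_self_ne_zero_of_cag hcg ht) (sff_self_ne_zero_of_cag hcg ht') horth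
  have hcodazzi : ⟪nproj ψ q (fderiv ℝ c q t), sff ψ q t' t'⟫ = 0 := by
    rw [inner_nproj_fderiv_sff_comm hψ.1 hc hcg, h₀, inner_zero_right]
  rw [← Submodule.starProjection_eq_self_iff.2 (nproj_mem_nor (fderiv ℝ c q t)),
    starProjection_eq_of_eq_span_pair hspan.symm horth, hcodazzi, zero_div, zero_smul, add_zero,
    real_inner_comm, inner_nproj_right_of_mem_nor (sff_mem_nor t t)]

def frameCoeff (ψ c : Pl → Amb 4) (T : Pl → Pl) (q : Pl) : ℝ :=
  ⟪sff ψ q (T q) (T q), fderiv ℝ c q (T q)⟫ / ⟪sff ψ q (T q) (T q), sff ψ q (T q) (T q)⟫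

/-- The field `j` of the theorem, in parameter coordinates. -/
def jCoords (ψ c : Pl → Amb 4) (T₁ T₂ : Pl → Pl) (q : Pl) : Pl :=
  frameCoeff ψ c T₁ q • T₁ q + frameCoeff ψ c T₂ q • T₂ q

theorem contDiff_frameCoeff (hψ : Immersion ψ) (hcs : ContDiff ℝ (⊤ : ℕ∞) c) (hcg : CAG ψ c)
    (hT : IsOrthonormalFrame ψ T₁ T₂) {T : Pl → Pl} (hTs : ContDiff ℝ (⊤ : ℕ∞) T)
    (hTne : ∀ q, fderiv ℝ ψ q (T q) ≠ 0) : ContDiff ℝ (⊤ : ℕ∞) (frameCoeff ψ c T) := by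
  have hb : ContDiff ℝ (⊤ : ℕ∞) fun q => sff ψ q (T q) (T q) := by
    simp_rw [sff_eq hψ.1]
    exact hT.contDiff_nproj hψ
      (((contDiff_fderiv (contDiff_fderiv hψ.1)).clm_apply hTs).clm_apply hTs)
  exact (hb.inner ℝ ((contDiff_fderiv hcs).clm_apply hTs)).div (hb.inner ℝ hb) fun q =>
    inner_self_ne_zero.2 (sff_self_ne_zero_of_cag hcg (hTne q))

theorem representsNormalDeriv_jCoords (hψ : Immersion ψ) (hflat : FlatSurface ψ)
    (hc : NormalField ψ c) (hcg : CAG ψ c) (hT : IsOrthonormalFrame ψ T₁ T₂)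
    (hasym : ∀ q, sff ψ q (T₁ q) (T₂ q) = 0) :
    RepresentsNormalDeriv ψ c fun q => fderiv ℝ ψ q (jCoords ψ c T₁ T₂ q) := by
  have hs := hψ.1
  have hne : ∀ {q t}, ‖fderiv ℝ ψ q t‖ = 1 → fderiv ℝ ψ q t ≠ 0 := fun h =>
    ne_zero_of_norm_ne_zero (h ▸ one_ne_zero)
  have hW : ContDiff ℝ (⊤ : ℕ∞) (jCoords ψ c T₁ T₂) :=
    ((contDiff_frameCoeff hψ hc.1 hcg hT hT.contDiff_fst fun q => hne (hT.norm_fst q)).smul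
      hT.contDiff_fst).add
    ((contDiff_frameCoeff hψ hc.1 hcg hT hT.contDiff_snd fun q => hne (hT.norm_snd q)).smul
      hT.contDiff_snd)
  refine ⟨⟨(contDiff_fderiv hs).clm_apply hW, fun q => fderiv_mem_tang _⟩, fun q v => ?_⟩
  have horth : ⟪sff ψ q (T₁ q) (T₁ q), sff ψ q (T₂ q) (T₂ q)⟫ = 0 := by
    rw [inner_sff_comm_of_flat hψ hT hflat, sff_comm hs q (T₂ q), hasym, inner_zero_left]
  have hN₁ := nproj_fderiv_of_sff_eq_zero hψ hc hcg (hne (hT.norm_fst q)) (hne (hT.norm_snd q))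
    (hasym q) horth
  have hN₂ := nproj_fderiv_of_sff_eq_zero hψ hc hcg (hne (hT.norm_snd q)) (hne (hT.norm_fst q))
    (by rw [sff_comm hs, hasym]) (by rwa [real_inner_comm])
  obtain ⟨x₁, x₂, rfl⟩ : ∃ x₁ x₂ : ℝ, v = x₁ • T₁ q + x₂ • T₂ q :=
    ⟨_, _, eq_frame_coords (hψ.2 q) (hT.norm_fst q) (hT.norm_snd q) (hT.inner_eq_zero q) v⟩
  rw [nproj_fderiv_dpsi_comp hs (hW.differentiable (by simp) q), jCoords]
  rw [nproj_eq_starProjection] at hN₁ hN₂ ⊢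
  simp only [map_add, map_smul, hN₁, hN₂, sff_add_left hs, sff_add_right hs, sff_smul_left hs,
    sff_smul_right hs, hasym, sff_comm hs q (T₂ q) (T₁ q), frameCoeff]
  module

end Existence

end ImmersedSurface

open ImmersedSurface in
theorem statement_11_general (ψ : Pl → Amb 4) (hψ : Immersion ψ)
    (hflat : FlatSurface ψ)
    (c : Pl → Amb 4) (hc : NormalField ψ c) (hcg : CAG ψ c)
    (T₁ T₂ : Pl → Pl)
    (hT₁s : ContDiff ℝ (⊤ : ℕ∞) T₁) (hT₂s : ContDiff ℝ (⊤ : ℕ∞) T₂)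
    (hT₁ : ∀ q, ‖fderiv ℝ ψ q (T₁ q)‖ = 1) (hT₂ : ∀ q, ‖fderiv ℝ ψ q (T₂ q)‖ = 1)
    (hT₁₂ : ∀ q, ⟪fderiv ℝ ψ q (T₁ q), fderiv ℝ ψ q (T₂ q)⟫ = 0)
    (hb₃ : ∀ q, sff ψ q (T₁ q) (T₂ q) = 0) :
    (∃! j : Pl → Amb 4, TangentField ψ j ∧
        ∀ q (v : Pl), nproj ψ q (fderiv ℝ j q v) = nproj ψ q (fderiv ℝ c q v)) ∧
    ∀ j : Pl → Amb 4, TangentField ψ j →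
      (∀ q (v : Pl), nproj ψ q (fderiv ℝ j q v) = nproj ψ q (fderiv ℝ c q v)) →
      HalfGradCSq ψ c j ∧
      ∀ q, j q =
        ((⟪sff ψ q (T₁ q) (T₁ q), fderiv ℝ c q (T₁ q)⟫ : ℝ) /
            (⟪sff ψ q (T₁ q) (T₁ q), sff ψ q (T₁ q) (T₁ q)⟫ : ℝ)) • fderiv ℝ ψ q (T₁ q) +
        ((⟪sff ψ q (T₂ q) (T₂ q), fderiv ℝ c q (T₂ q)⟫ : ℝ) /
            (⟪sff ψ q (T₂ q) (T₂ q), sff ψ q (T₂ q) (T₂ q)⟫ : ℝ)) • fderiv ℝ ψ q (T₂ q) := by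
  have hj₀ := representsNormalDeriv_jCoords hψ hflat hc hcg ⟨hT₁s, hT₂s, hT₁, hT₂, hT₁₂⟩ hb₃
  refine ⟨⟨_, hj₀, fun j hj => RepresentsNormalDeriv.unique hψ.1 hc hcg hj hj₀⟩,
    fun j hjT hjc => ?_⟩
  have hj : RepresentsNormalDeriv ψ c j := ⟨hjT, hjc⟩
  refine ⟨hj.halfGradCSq hψ.1 hc hcg, fun q => ?_⟩
  rw [hj.unique hψ.1 hc hcg hj₀]
  simp only [jCoords, frameCoeff, map_add, map_smul]

/-- On a flat semiumbilical surface in ℝ⁴ with normal section `c`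
satisfying `c·α = g`, there is a unique tangent field `j` with
`α(j,X) = ∇^⊥_X c` for all tangent `X` (for a tangent field `j`, `α(X,j) = (D_X j)^⊥`),
and it equals `½ grad⟨c,c⟩`; in an orthonormal frame `(t₁,t₂)` of asymptotic directions,
`j = (⟨b₁,D_{t₁}c⟩/⟨b₁,b₁⟩) t₁ + (⟨b₂,D_{t₂}c⟩/⟨b₂,b₂⟩) t₂`. -/
theorem statement_11 (ψ : Pl → Amb 4) (hψ : Immersion ψ)
    (hflat : FlatSurface ψ) (hsem : Semiumbilical ψ)
    (c : Pl → Amb 4) (hc : NormalField ψ c) (hcg : CAG ψ c)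
    (T₁ T₂ : Pl → Pl)
    (hT₁s : ContDiff ℝ (⊤ : ℕ∞) T₁) (hT₂s : ContDiff ℝ (⊤ : ℕ∞) T₂)
    (hT₁ : ∀ q, ‖fderiv ℝ ψ q (T₁ q)‖ = 1) (hT₂ : ∀ q, ‖fderiv ℝ ψ q (T₂ q)‖ = 1)
    (hT₁₂ : ∀ q, ⟪fderiv ℝ ψ q (T₁ q), fderiv ℝ ψ q (T₂ q)⟫ = 0)
    (hb₃ : ∀ q, sff ψ q (T₁ q) (T₂ q) = 0) :
    (∃! j : Pl → Amb 4, TangentField ψ j ∧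
        ∀ q (v : Pl), nproj ψ q (fderiv ℝ j q v) = nproj ψ q (fderiv ℝ c q v)) ∧
    ∀ j : Pl → Amb 4, TangentField ψ j →
      (∀ q (v : Pl), nproj ψ q (fderiv ℝ j q v) = nproj ψ q (fderiv ℝ c q v)) →
      HalfGradCSq ψ c j ∧
      ∀ q, j q =
        ((⟪sff ψ q (T₁ q) (T₁ q), fderiv ℝ c q (T₁ q)⟫ : ℝ) /
            (⟪sff ψ q (T₁ q) (T₁ q), sff ψ q (T₁ q) (T₁ q)⟫ : ℝ)) • fderiv ℝ ψ q (T₁ q) +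
        ((⟪sff ψ q (T₂ q) (T₂ q), fderiv ℝ c q (T₂ q)⟫ : ℝ) /
            (⟪sff ψ q (T₂ q) (T₂ q), sff ψ q (T₂ q) (T₂ q)⟫ : ℝ)) • fderiv ℝ ψ q (T₂ q) :=
  statement_11_general ψ hψ hflat c hc hcg T₁ T₂ hT₁s hT₂s hT₁ hT₂ hT₁₂ hb₃
end
end
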